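/- arXiv:2009.13324 — 6 statements merged into one kernel-verified Lean document; each statement's English description precedes it below -/
import Mathlib

section
/- Let f, g : ℝ → ℝ be C¹ strictly convex superlinear functions with minima θ_f, θ_g, f(θ_f) ≤ g(θ_g), and let θ̄_g ≥ θ_f satisfy f(θ̄_g) = g(θ_g). Let g₊ denote the restriction of g to [θ_g, ∞) and g₊⁻¹ its inverse on [g(θ_g), ∞). Then the function h₊ : [f'(θ̄_g), ∞) → [0, ∞) defined by h₊(p) = g'(g₊⁻¹(f((f')⁻¹(p)))) is well defined, continuous, and strictly increasing, with h₊(f'(θ̄_g)) = 0 and h₊(p) → ∞ as p → ∞. -/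
/-!
Strict convexity makes `f'` a strictly increasing bijection of `ℝ` (so `finv` is its
order-inverse) and makes `f`, `g` strictly increasing to the right of their minimizers; hence
`gplusinv` is a strictly increasing inverse of `g` from `[g θg, ∞)` onto `[θg, ∞)`, and a monotone
map onto a half-line is continuous. So `h₊ = g' ∘ gplusinv ∘ f ∘ finv` is a composition of
continuous strictly increasing maps between half-lines, starting at `h₊(f'(θbar)) = g'(θg) = 0`.
It tends to `∞` because every factor does: `f` grows at least linearly beyond its minimizer, and
by convexity `g'(x) ≥ (g x - g 0) / x`, which superlinearity sends to `∞`.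
-/

open Filter Set

theorem StrictMono.exists_orderIso_symm_eq {α β : Type*} [LinearOrder α] [Preorder β]
    {φ : α → β} {ψ : β → α} (hφ : StrictMono φ) (h : Function.LeftInverse φ ψ) :
    ∃ e : α ≃o β, ⇑e = φ ∧ ψ = e.symm :=
  ⟨hφ.orderIsoOfSurjective φ h.surjective, rfl,
    funext fun y => ((OrderIso.symm_apply_eq _).2 (h y).symm).symm⟩

theorem MonotoneOn.continuousOn_of_surjOn {α β : Type*} [LinearOrder α] [TopologicalSpace α]
    [OrderTopology α] [LinearOrder β] [TopologicalSpace β] [OrderTopology β] [DenselyOrdered β]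
    {f : α → β} {s : Set α} {t : Set β} [s.OrdConnected] [t.OrdConnected]
    (hf : MonotoneOn f s) (hmaps : MapsTo f s t) (hsurj : SurjOn f s t) : ContinuousOn f s := by
  have hcont : Continuous (hmaps.restrict f s t) :=
    Monotone.continuous_of_surjective (fun x y hxy => hf x.2 y.2 hxy)
      (hmaps.restrict_surjective_iff.2 hsurj)
  exact continuousOn_iff_continuous_domRestrict.2 (continuous_subtype_val.comp hcont)

section InverseOnIci

variable {α β : Type*} [LinearOrder α] [LinearOrder β]
  {φ : α → β} {ψ : β → α} {a : α}

theorem StrictMonoOn.leftInvOn_Ici (hφ : StrictMonoOn φ (Ici a))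
    (hψ : MapsTo ψ (Ici (φ a)) (Ici a)) (hinv : RightInvOn ψ φ (Ici (φ a))) :
    LeftInvOn ψ φ (Ici a) :=
  hφ.injOn.rightInvOn_of_leftInvOn hinv (fun _ hx => hφ.monotoneOn self_mem_Ici hx hx) hψ

theorem StrictMonoOn.strictMonoOn_Ici_of_rightInvOn (hφ : StrictMonoOn φ (Ici a))
    (hψ : MapsTo ψ (Ici (φ a)) (Ici a)) (hinv : RightInvOn ψ φ (Ici (φ a))) :
    StrictMonoOn ψ (Ici (φ a)) := fun y hy z hz hyz => by
  rw [← hφ.lt_iff_lt (hψ hy) (hψ hz), hinv hy, hinv hz]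
  exact hyz

theorem StrictMonoOn.continuousOn_Ici_of_rightInvOn [TopologicalSpace α] [OrderTopology α]
    [DenselyOrdered α] [TopologicalSpace β] [OrderTopology β] (hφ : StrictMonoOn φ (Ici a))
    (hψ : MapsTo ψ (Ici (φ a)) (Ici a)) (hinv : RightInvOn ψ φ (Ici (φ a))) :
    ContinuousOn ψ (Ici (φ a)) :=
  (hφ.strictMonoOn_Ici_of_rightInvOn hψ hinv).monotoneOn.continuousOn_of_surjOn hψ
    ((hφ.leftInvOn_Ici hψ hinv).surjOn fun _ hx => hφ.monotoneOn self_mem_Ici hx hx)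

theorem StrictMonoOn.tendsto_atTop_of_rightInvOn (hφ : StrictMonoOn φ (Ici a))
    (hψ : MapsTo ψ (Ici (φ a)) (Ici a)) (hinv : RightInvOn ψ φ (Ici (φ a))) :
    Tendsto ψ atTop atTop := by
  refine tendsto_atTop.2 fun b => ?_
  have hb : max b a ∈ Ici a := le_max_right b a
  have hφb : φ (max b a) ∈ Ici (φ a) := hφ.monotoneOn self_mem_Ici hb hb
  filter_upwards [eventually_ge_atTop (φ (max b a))] with y hy
  calc b ≤ max b a := le_max_left b a
    _ = ψ (φ (max b a)) := (hφ.leftInvOn_Ici hψ hinv hb).symm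
    _ ≤ ψ y := (hφ.strictMonoOn_Ici_of_rightInvOn hψ hinv).monotoneOn hφb (hφb.trans hy) hy

end InverseOnIci

section ConvexFunctions

variable {f : ℝ → ℝ}

theorem StrictConvexOn.strictMono_deriv (hf : StrictConvexOn ℝ univ f) (hd : Differentiable ℝ f) :
    StrictMono (deriv f) :=
  strictMonoOn_univ.1 (hf.strictMonoOn_deriv fun x _ => hd x)

theorem strictMonoOn_Ici_of_strictMono_deriv {a : ℝ} (hc : Continuous f)
    (hf' : StrictMono (deriv f)) (ha : deriv f a = 0) : StrictMonoOn f (Ici a) :=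
  strictMonoOn_of_deriv_pos (convex_Ici a) hc.continuousOn fun x hx => by
    rw [interior_Ici] at hx
    exact ha ▸ hf' hx

theorem ConvexOn.tendsto_atTop_of_deriv_pos {a : ℝ} (hf : ConvexOn ℝ univ f)
    (hd : DifferentiableAt ℝ f a) (ha : 0 < deriv f a) : Tendsto f atTop atTop := by
  have htangent : ∀ x, a < x → f a + deriv f a * (x - a) ≤ f x := fun x hx => by
    have := hf.deriv_le_slope (mem_univ a) (mem_univ x) hx hd
    rw [slope_def_field, le_div_iff₀ (sub_pos.2 hx)] at this
    linarith
  have hline : Tendsto (fun x => f a + deriv f a * (x - a)) atTop atTop :=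
    tendsto_atTop_add_const_left _ _
      (Tendsto.const_mul_atTop ha (tendsto_atTop_add_const_right _ _ tendsto_id))
  exact tendsto_atTop_mono' _ (eventually_gt_atTop a |>.mono htangent) hline

theorem tendsto_div_atTop_of_superlinear
    (hsuper : Tendsto (fun x => f x / |x|) (cocompact ℝ) atTop) :
    Tendsto (fun x => f x / x) atTop atTop :=
  (hsuper.mono_left atTop_le_cocompact).congr' <| by
    filter_upwards [eventually_gt_atTop 0] with x hx
    rw [abs_of_pos hx]

theorem ConvexOn.tendsto_deriv_atTop (hf : ConvexOn ℝ univ f) (hd : Differentiable ℝ f)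
    (hsuper : Tendsto (fun x => f x / x) atTop atTop) : Tendsto (deriv f) atTop atTop := by
  have hslope : Tendsto (fun x => f x / x + -(f 0 / x)) atTop atTop :=
    hsuper.atTop_add (tendsto_const_nhds.div_atTop tendsto_id).neg
  refine tendsto_atTop_mono' _ ?_ hslope
  filter_upwards [eventually_gt_atTop 0] with x hx
  have := hf.slope_le_deriv (mem_univ 0) (mem_univ x) hx (hd x)
  rwa [slope_def_field, sub_zero, sub_div, sub_eq_add_neg] at this

end ConvexFunctions

theorem stmt4_general (f g : ℝ → ℝ) (hfC1 : ContDiff ℝ 1 f) (hgC1 : ContDiff ℝ 1 g)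
    (hfconv : StrictConvexOn ℝ Set.univ f) (hgconv : StrictConvexOn ℝ Set.univ g)
    (hgsuper : Tendsto (fun p => g p / |p|) (cocompact ℝ) atTop)
    (θf θg θbar : ℝ) (hθf : ∀ x, f θf ≤ f x) (hθg : ∀ x, g θg ≤ g x)
    (hθbar : θf ≤ θbar) (hfθbar : f θbar = g θg)
    (finv gplusinv : ℝ → ℝ)
    (hfinv : ∀ p, deriv f (finv p) = p)
    (hgpi : ∀ y, g θg ≤ y → θg ≤ gplusinv y ∧ g (gplusinv y) = y) :
    (∀ p, deriv f θbar ≤ p → g θg ≤ f (finv p)) ∧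
    ContinuousOn (fun p => deriv g (gplusinv (f (finv p)))) (Set.Ici (deriv f θbar)) ∧
    StrictMonoOn (fun p => deriv g (gplusinv (f (finv p)))) (Set.Ici (deriv f θbar)) ∧
    (∀ p, deriv f θbar ≤ p → 0 ≤ deriv g (gplusinv (f (finv p)))) ∧
    deriv g (gplusinv (f (finv (deriv f θbar)))) = 0 ∧
    Tendsto (fun p => deriv g (gplusinv (f (finv p)))) atTop atTop := by
  have hfd : Differentiable ℝ f := hfC1.differentiable one_ne_zero
  have hgd : Differentiable ℝ g := hgC1.differentiable one_ne_zero
  have hf' := hfconv.strictMono_deriv hfd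
  have hg' := hgconv.strictMono_deriv hgd
  have hf'θf : deriv f θf = 0 := IsLocalMin.deriv_eq_zero (.of_forall hθf)
  have hg'θg : deriv g θg = 0 := IsLocalMin.deriv_eq_zero (.of_forall hθg)
  have hfmono := strictMonoOn_Ici_of_strictMono_deriv hfd.continuous hf' hf'θf
  have hgmono := strictMonoOn_Ici_of_strictMono_deriv hgd.continuous hg' hg'θg
  have hψmaps : MapsTo gplusinv (Ici (g θg)) (Ici θg) := fun y hy => (hgpi y hy).1
  have hψinv : RightInvOn gplusinv g (Ici (g θg)) := fun y hy => (hgpi y hy).2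
  obtain ⟨e, he, rfl⟩ := hf'.exists_orderIso_symm_eq hfinv
  have hfinv_θbar : e.symm (deriv f θbar) = θbar := he ▸ e.symm_apply_apply θbar
  have hfinv_maps : MapsTo e.symm (Ici (deriv f θbar)) (Ici θbar) := fun p hp =>
    hfinv_θbar ▸ e.symm.monotone hp
  have hf_maps : MapsTo f (Ici θbar) (Ici (g θg)) := fun x hx =>
    hfθbar ▸ hfmono.monotoneOn (mem_Ici.2 hθbar) (mem_Ici.2 (hθbar.trans hx)) hx
  have hf_finv_maps := hf_maps.comp hfinv_maps
  refine ⟨fun p hp => hf_finv_maps hp, ?_, ?_, fun p hp => ?_, ?_, ?_⟩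
  · exact (hgC1.continuous_deriv le_rfl).comp_continuousOn
      ((hgmono.continuousOn_Ici_of_rightInvOn hψmaps hψinv).comp
        (hfd.continuous.comp e.symm.continuous).continuousOn hf_finv_maps)
  · exact hg'.comp_strictMonoOn ((hgmono.strictMonoOn_Ici_of_rightInvOn hψmaps hψinv).comp
      ((hfmono.mono (Ici_subset_Ici.2 hθbar)).comp
        (e.symm.strictMono.strictMonoOn _) hfinv_maps) hf_finv_maps)
  · exact hg'θg ▸ hg'.monotone (hψmaps (hf_finv_maps hp))
  · rw [hfinv_θbar, hfθbar, hgmono.leftInvOn_Ici hψmaps hψinv self_mem_Ici, hg'θg]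
  · have hftop := hfconv.convexOn.tendsto_atTop_of_deriv_pos (hfd (θf + 1))
      (hf'θf ▸ hf' (lt_add_one θf))
    exact (hgconv.convexOn.tendsto_deriv_atTop hgd
      (tendsto_div_atTop_of_superlinear hgsuper)).comp
      ((hgmono.tendsto_atTop_of_rightInvOn hψmaps hψinv).comp
        (hftop.comp e.symm.tendsto_atTop))

/-- the function `h₊(p) = g'(g₊⁻¹(f((f')⁻¹(p))))` is well defined on
`[f'(θ̄g), ∞)`, continuous, strictly increasing, nonnegative, vanishes at
`f'(θ̄g)` and tends to `∞` at `∞`. -/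
theorem stmt4 (f g : ℝ → ℝ) (hfC1 : ContDiff ℝ 1 f) (hgC1 : ContDiff ℝ 1 g)
    (hfconv : StrictConvexOn ℝ Set.univ f) (hgconv : StrictConvexOn ℝ Set.univ g)
    (hfsuper : Tendsto (fun p => f p / |p|) (cocompact ℝ) atTop)
    (hgsuper : Tendsto (fun p => g p / |p|) (cocompact ℝ) atTop)
    (θf θg θbar : ℝ) (hθf : ∀ x, f θf ≤ f x) (hθg : ∀ x, g θg ≤ g x)
    (hle : f θf ≤ g θg) (hθbar : θf ≤ θbar) (hfθbar : f θbar = g θg)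
    (finv gplusinv : ℝ → ℝ)
    (hfinv : ∀ p, deriv f (finv p) = p)
    (hgpi : ∀ y, g θg ≤ y → θg ≤ gplusinv y ∧ g (gplusinv y) = y) :
    (∀ p, deriv f θbar ≤ p → g θg ≤ f (finv p)) ∧
    ContinuousOn (fun p => deriv g (gplusinv (f (finv p)))) (Set.Ici (deriv f θbar)) ∧
    StrictMonoOn (fun p => deriv g (gplusinv (f (finv p)))) (Set.Ici (deriv f θbar)) ∧
    (∀ p, deriv f θbar ≤ p → 0 ≤ deriv g (gplusinv (f (finv p)))) ∧
    deriv g (gplusinv (f (finv (deriv f θbar)))) = 0 ∧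
    Tendsto (fun p => deriv g (gplusinv (f (finv p)))) atTop atTop :=
  stmt4_general f g hfC1 hgC1 hfconv hgconv hgsuper θf θg θbar hθf hθg hθbar hfθbar finv gplusinv
    hfinv hgpi
end

section
/- Let T > 0, m ≥ 0, and h₊ : [m, ∞) → [0, ∞) be continuous and strictly increasing with h₊(m) = 0. Let 0 ≤ α < β, let ρ : [α, β] → (−∞, 0] be a nondecreasing function, and suppose t : (α, β] → (0, T) satisfies, for every x ∈ (α, β], x/(T − t(x)) ≥ m and h₊(x/(T − t(x))) = −ρ(x)/t(x). Then t is strictly decreasing on (α, β]. -/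
open Filter

/-- the time function `t(x)` solving `h₊(x/(T−t(x))) = −ρ(x)/t(x)`
for a nondecreasing nonpositive `ρ` is strictly decreasing. -/
theorem stmt6 (T m α β : ℝ) (h ρ t : ℝ → ℝ)
    (hT : 0 < T) (hm : 0 ≤ m) (hα : 0 ≤ α) (hαβ : α < β)
    (hcont : ContinuousOn h (Set.Ici m)) (hmono : StrictMonoOn h (Set.Ici m))
    (hhm : h m = 0)
    (hρmono : MonotoneOn ρ (Set.Icc α β)) (hρnp : ∀ x ∈ Set.Icc α β, ρ x ≤ 0)
    (ht : ∀ x ∈ Set.Ioc α β, t x ∈ Set.Ioo (0:ℝ) T ∧ m ≤ x / (T - t x) ∧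
      h (x / (T - t x)) = -ρ x / t x) :
    StrictAntiOn t (Set.Ioc α β) := by
  intro x hx y hy hxy
  by_contra hcon
  push_neg at hcon
  obtain ⟨htx, hmx, heqx⟩ := ht x hx
  obtain ⟨hty, hmy, heqy⟩ := ht y hy
  have hx0 : 0 < x := lt_of_le_of_lt hα hx.1
  have hTx : 0 < T - t x := by linarith [htx.2]
  have hTy : 0 < T - t y := by linarith [hty.2]
  have hTle : T - t y ≤ T - t x := by linarith
  -- arguments comparison
  have harg : x / (T - t x) < y / (T - t y) := by
    calc x / (T - t x) < y / (T - t x) := by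
          exact div_lt_div_of_pos_right hxy hTx
      _ ≤ y / (T - t y) := by
          exact div_le_div_of_nonneg_left (le_of_lt (lt_of_lt_of_le hx0 hxy.le)) hTy hTle
  have hh : h (x / (T - t x)) < h (y / (T - t y)) :=
    hmono hmx hmy harg
  rw [heqx, heqy] at hh
  -- but -ρ y / t y ≤ -ρ x / t x
  have hρ : ρ x ≤ ρ y := hρmono ⟨hx.1.le, le_trans hxy.le hy.2⟩ ⟨le_trans hx.1.le hxy.le, hy.2⟩ hxy.le
  have hρx0 : 0 ≤ -ρ x := by
    have := hρnp x ⟨hx.1.le, le_trans hxy.le hy.2⟩; linarith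
  have : -ρ y / t y ≤ -ρ x / t x :=
    div_le_div₀ (by linarith) (by linarith) htx.1 hcon
  linarith
end

section
/- Let T > 0, x₀ > 0, and 0 < t₂ < t₁ < T. Let f be C¹ strictly convex with a₁, a₂ defined by f'(a_i) = x₀/(T − t_i) for i = 1, 2, so that a₂ < a₁ (assuming f' is a bijection). Then the line through (x₀, T) with slope s = (f(a₁) − f(a₂))/(a₁ − a₂), i.e. r(θ) = x₀ + (θ − T)·s, crosses the t-axis at a time t₃ with t₂ < t₃ < t₁; that is, there exists t₃ ∈ (t₂, t₁) with x₀ + (t₃ − T)·(f(a₁) − f(a₂))/(a₁ − a₂) = 0. -/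
open Set

/- By strict convexity the slope of the chord over `[a₂, a₁]` lies strictly between
`f'(a₂) = x₀/(T − t₂)` and `f'(a₁) = x₀/(T − t₁)`, and the line through `(x₀, T)` with a slope
in that range vanishes at a time strictly between `t₂` and `t₁`. -/

namespace StrictConvexOn

variable {f : ℝ → ℝ}

theorem lt_of_deriv_lt (hc : StrictConvexOn ℝ univ f) (hd : Differentiable ℝ f) {a b : ℝ}
    (h : deriv f a < deriv f b) : a < b :=
  ((hc.strictMonoOn_deriv fun _ _ => hd.differentiableAt).lt_iff_lt trivial trivial).mp h

theorem secant_slope_mem_Ioo_deriv (hc : StrictConvexOn ℝ univ f) (hd : Differentiable ℝ f)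
    {a b : ℝ} (hab : a < b) : (f b - f a) / (b - a) ∈ Ioo (deriv f a) (deriv f b) := by
  rw [← slope_def_field]
  exact ⟨hc.deriv_lt_slope trivial trivial hab hd.differentiableAt,
    hc.slope_lt_deriv trivial trivial hab hd.differentiableAt⟩

end StrictConvexOn

theorem exists_mem_Ioo_add_sub_mul_eq_zero {x₀ T t₁ t₂ s : ℝ} (hx₀ : 0 < x₀) (ht₂₁ : t₂ < t₁)
    (ht₁ : t₁ < T) (hs : s ∈ Ioo (x₀ / (T - t₂)) (x₀ / (T - t₁))) :
    ∃ t₃ ∈ Ioo t₂ t₁, x₀ + (t₃ - T) * s = 0 := by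
  have hT₁ : 0 < T - t₁ := by linarith
  have hT₂ : 0 < T - t₂ := by linarith
  have hs₀ : 0 < s := (div_pos hx₀ hT₂).trans hs.1
  obtain ⟨hlo, hhi⟩ := hs
  rw [div_lt_iff₀ hT₂] at hlo
  rw [lt_div_iff₀ hT₁] at hhi
  refine ⟨T - x₀ / s, ⟨?_, ?_⟩, by field_simp; ring⟩
  · have : x₀ / s < T - t₂ := by rw [div_lt_iff₀ hs₀]; linarith
    linarith
  · have : T - t₁ < x₀ / s := by rw [lt_div_iff₀ hs₀]; linarith
    linarith

theorem stmt9_general (f : ℝ → ℝ) (hC1 : ContDiff ℝ 1 f)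
    (hc : StrictConvexOn ℝ Set.univ f)
    (T x0 t1 t2 a1 a2 : ℝ) (hx0 : 0 < x0)
    (ht21 : t2 < t1) (ht1 : t1 < T)
    (ha1 : deriv f a1 = x0 / (T - t1)) (ha2 : deriv f a2 = x0 / (T - t2)) :
    a2 < a1 ∧ ∃ t3 : ℝ, t2 < t3 ∧ t3 < t1 ∧
      x0 + (t3 - T) * ((f a1 - f a2) / (a1 - a2)) = 0 := by
  have hd : Differentiable ℝ f := hC1.differentiable one_ne_zero
  have hderiv : deriv f a2 < deriv f a1 := by
    rw [ha1, ha2]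
    exact div_lt_div_of_pos_left hx0 (by linarith) (by linarith)
  have ha : a2 < a1 := hc.lt_of_deriv_lt hd hderiv
  have hslope := hc.secant_slope_mem_Ioo_deriv hd ha
  rw [ha1, ha2] at hslope
  obtain ⟨t3, ⟨ht23, ht31⟩, hzero⟩ := exists_mem_Ioo_add_sub_mul_eq_zero hx0 ht21 ht1 hslope
  exact ⟨ha, t3, ht23, ht31, hzero⟩

/-- the secant line through `(x₀, T)` with slope
`(f(a₁) − f(a₂))/(a₁ − a₂)` crosses the `t`-axis between `t₂` and `t₁`. -/
theorem stmt9 (f : ℝ → ℝ) (hC1 : ContDiff ℝ 1 f)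
    (hc : StrictConvexOn ℝ Set.univ f)
    (hbij : Function.Bijective (deriv f))
    (T x0 t1 t2 a1 a2 : ℝ) (hT : 0 < T) (hx0 : 0 < x0)
    (ht2 : 0 < t2) (ht21 : t2 < t1) (ht1 : t1 < T)
    (ha1 : deriv f a1 = x0 / (T - t1)) (ha2 : deriv f a2 = x0 / (T - t2)) :
    a2 < a1 ∧ ∃ t3 : ℝ, t2 < t3 ∧ t3 < t1 ∧
      x0 + (t3 - T) * ((f a1 - f a2) / (a1 - a2)) = 0 :=
  stmt9_general f hC1 hc T x0 t1 t2 a1 a2 hx0 ht21 ht1 ha1 ha2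
end

section
/- Let a < b and let R, s : [a, b] → ℝ be Lipschitz functions with R(b) = s(b), such that for almost every t ∈ (a, b), if s(t) < R(t) then R'(t) ≥ s'(t). Then R(t) ≤ s(t) for all t ∈ [a, b]. -/
/-!
The positive part `v = max (R - s) 0` is Lipschitz, hence absolutely continuous, and its
derivative is a.e. nonnegative: where `R > s` it agrees locally with `R - s`, whose derivative
is `≥ 0` by hypothesis, and where `R ≤ s` it attains its minimum `0`. By the fundamental
theorem of calculus for absolutely continuous functions, `v t ≤ v b = 0` for every `t`.
-/

open MeasureTheory Set Filter Topology

theorem AbsolutelyContinuousOnInterval.le_of_ae_deriv_nonneg {f : ℝ → ℝ} {x y : ℝ}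
    (hf : AbsolutelyContinuousOnInterval f x y) (hxy : x ≤ y)
    (hf' : ∀ᵐ t ∂volume.restrict (Ioo x y), 0 ≤ deriv f t) : f x ≤ f y := by
  rw [← sub_nonneg, ← hf.integral_deriv_eq_sub]
  refine intervalIntegral.integral_nonneg_of_ae_restrict hxy ?_
  rwa [← Measure.restrict_congr_set Ioo_ae_eq_Icc]

theorem deriv_max_zero_nonneg {u : ℝ → ℝ} {t : ℝ} (hu : ContinuousAt u t)
    (hu' : 0 < u t → 0 ≤ deriv u t) : 0 ≤ deriv (fun x => max (u x) 0) t := by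
  rcases le_or_gt (u t) 0 with hle | hpos
  -- `deriv` vanishes at a local minimum even where the function is not differentiable.
  · have hmin : IsLocalMin (fun x => max (u x) 0) t :=
      Eventually.of_forall fun x => by simp [max_eq_right hle]
    rw [hmin.deriv_eq_zero]
  · have heq : (fun x => max (u x) 0) =ᶠ[𝓝 t] u :=
      (continuousAt_const.eventually_lt hu hpos).mono fun x hx => max_eq_left hx.le
    rw [heq.deriv_eq]
    exact hu' hpos

theorem ae_deriv_max_sub_zero_nonneg {R s : ℝ → ℝ} {a b : ℝ}
    (hR : AbsolutelyContinuousOnInterval R a b) (hs : AbsolutelyContinuousOnInterval s a b)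
    (hae : ∀ᵐ t ∂volume.restrict (Ioo a b),
      s t < R t → derivWithin s (Icc a b) t ≤ derivWithin R (Icc a b) t) :
    ∀ᵐ t ∂volume.restrict (Ioo a b), 0 ≤ deriv (fun x => max (R x - s x) 0) t := by
  filter_upwards [hae, ae_restrict_of_ae hR.ae_differentiableAt,
    ae_restrict_of_ae hs.ae_differentiableAt, ae_restrict_mem measurableSet_Ioo]
    with t hder hRt hst ht
  have htI : t ∈ uIcc a b := Icc_subset_uIcc (Ioo_subset_Icc_self ht)
  have hIcc : Icc a b ∈ 𝓝 t := Icc_mem_nhds ht.1 ht.2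
  have hdiff := (hRt htI).hasDerivAt.fun_sub (hst htI).hasDerivAt
  refine deriv_max_zero_nonneg hdiff.continuousAt fun hpos => ?_
  rw [hdiff.deriv, sub_nonneg, ← derivWithin_of_mem_nhds hIcc, ← derivWithin_of_mem_nhds hIcc]
  exact hder (sub_pos.1 hpos)

theorem stmt10_general (a b : ℝ) (R s : ℝ → ℝ) (KR Ks : NNReal)
    (hR : LipschitzOnWith KR R (Set.Icc a b))
    (hs : LipschitzOnWith Ks s (Set.Icc a b))
    (hend : R b = s b)
    (hae : ∀ᵐ t ∂(volume.restrict (Set.Ioo a b)),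
      s t < R t →
        derivWithin s (Set.Icc a b) t ≤ derivWithin R (Set.Icc a b) t) :
    ∀ t ∈ Set.Icc a b, R t ≤ s t := by
  intro t ht
  rw [← uIcc_of_le (ht.1.trans ht.2)] at hR hs
  have hv : LipschitzOnWith (KR + Ks) (fun x => max (R x - s x) 0) (uIcc a b) := by
    simpa [Function.comp_def] using
      (LipschitzWith.id.max_const 0).comp_lipschitzOnWith (hR.sub hs)
  have hv' := ae_deriv_max_sub_zero_nonneg hR.absolutelyContinuousOnInterval
    hs.absolutelyContinuousOnInterval hae
  have hsub : uIcc t b ⊆ uIcc a b := uIcc_subset_uIcc (Icc_subset_uIcc ht) right_mem_uIcc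
  have hvtb := (hv.mono hsub).absolutelyContinuousOnInterval.le_of_ae_deriv_nonneg ht.2
    (ae_restrict_of_ae_restrict_of_subset (Ioo_subset_Ioo_left ht.1) hv')
  simpa [hend] using hvtb

/-- comparison principle for Lipschitz curves: if `R(b) = s(b)` and
a.e. on `(a,b)`, whenever `s(t) < R(t)` one has `R'(t) ≥ s'(t)`, then `R ≤ s`
on `[a,b]`. -/
theorem stmt10 (a b : ℝ) (hab : a < b) (R s : ℝ → ℝ) (KR Ks : NNReal)
    (hR : LipschitzOnWith KR R (Set.Icc a b))
    (hs : LipschitzOnWith Ks s (Set.Icc a b))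
    (hend : R b = s b)
    (hae : ∀ᵐ t ∂(volume.restrict (Set.Ioo a b)),
      s t < R t →
        derivWithin s (Set.Icc a b) t ≤ derivWithin R (Set.Icc a b) t) :
    ∀ t ∈ Set.Icc a b, R t ≤ s t :=
  stmt10_general a b R s KR Ks hR hs hend hae
end

section
/- Let T > 0, M₁ > 0, let K ∈ L²(ℝ) with ∫_ℝ |K(x)|² dx ≤ M₁, and let y : (y₀, 0) → ℝ be a measurable function with y(x) ≤ y₀ for all x, where y₀ < 0. If ∫_{y₀}^{0} |(x − y(x))/T − K(x)|² dx ≤ 2M₁, then |y₀|³ ≤ 18·M₁·T². -/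
open MeasureTheory

/-- bound on `|y₀|³` from the quadratic cost. -/
theorem stmt12 (T M₁ y₀ : ℝ) (K y : ℝ → ℝ)
    (hT : 0 < T) (hM : 0 < M₁) (hy₀ : y₀ < 0)
    (hKint : Integrable (fun x => (K x) ^ 2))
    (hK : ∫ x : ℝ, (K x) ^ 2 ≤ M₁)
    (hy : ∀ x ∈ Set.Ioo y₀ (0:ℝ), y x ≤ y₀)
    (hint : IntegrableOn (fun x => ((x - y x) / T - K x) ^ 2) (Set.Ioo y₀ 0))
    (hcost : ∫ x in Set.Ioo y₀ (0:ℝ), ((x - y x) / T - K x) ^ 2 ≤ 2 * M₁) :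
    |y₀| ^ 3 ≤ 18 * M₁ * T ^ 2 := by
  have hT2 : (0:ℝ) < T ^ 2 := by positivity
  -- ∫ K² over the interval is ≤ M₁
  have hKset : ∫ x in Set.Ioo y₀ (0:ℝ), (K x) ^ 2 ≤ M₁ := by
    refine le_trans (setIntegral_le_integral hKint ?_) hK
    filter_upwards with x using by positivity
  -- pointwise bound
  have hpt : ∀ x ∈ Set.Ioo y₀ (0:ℝ),
      ((x - y₀) / T) ^ 2 ≤ 2 * ((x - y x) / T - K x) ^ 2 + 2 * (K x) ^ 2 := by
    intro x hx
    have h1 : y x ≤ y₀ := hy x hx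
    have h2 : y₀ < x := hx.1
    have hc : (0:ℝ) ≤ (x - y₀) / T := by
      apply div_nonneg (by linarith) hT.le
    have hca : (x - y₀) / T ≤ (x - y x) / T := by
      gcongr
    nlinarith [sq_nonneg ((x - y x) / T - 2 * K x), sq_nonneg ((x - y x) / T),
      mul_self_le_mul_self hc hca]
  -- integrability of the RHS
  have hRHS : IntegrableOn
      (fun x => 2 * ((x - y x) / T - K x) ^ 2 + 2 * (K x) ^ 2) (Set.Ioo y₀ 0) := by
    exact (hint.const_mul 2).add ((hKint.integrableOn).const_mul 2)
  have hLHSint : IntegrableOn (fun x => ((x - y₀) / T) ^ 2) (Set.Ioo y₀ 0) := by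
    have hc : Continuous (fun x : ℝ => ((x - y₀) / T) ^ 2) := by fun_prop
    exact (hc.integrableOn_Icc (a := y₀) (b := 0)).mono_set Set.Ioo_subset_Icc_self
  have hmono : ∫ x in Set.Ioo y₀ (0:ℝ), ((x - y₀) / T) ^ 2
      ≤ ∫ x in Set.Ioo y₀ (0:ℝ), (2 * ((x - y x) / T - K x) ^ 2 + 2 * (K x) ^ 2) :=
    setIntegral_mono_on hLHSint hRHS measurableSet_Ioo hpt
  have hsplit : ∫ x in Set.Ioo y₀ (0:ℝ), (2 * ((x - y x) / T - K x) ^ 2 + 2 * (K x) ^ 2)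
      = 2 * (∫ x in Set.Ioo y₀ (0:ℝ), ((x - y x) / T - K x) ^ 2)
        + 2 * (∫ x in Set.Ioo y₀ (0:ℝ), (K x) ^ 2) := by
    rw [integral_add (hint.const_mul 2) ((hKint.integrableOn).const_mul 2)]
    simp_rw [← smul_eq_mul, integral_smul]
  have hbound : ∫ x in Set.Ioo y₀ (0:ℝ), ((x - y₀) / T) ^ 2 ≤ 6 * M₁ := by
    rw [hsplit] at hmono
    linarith
  -- compute the left integral
  have hcomp : ∫ x in Set.Ioo y₀ (0:ℝ), ((x - y₀) / T) ^ 2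
      = (-y₀) ^ 3 / 3 / T ^ 2 := by
    rw [← integral_Ioc_eq_integral_Ioo, ← intervalIntegral.integral_of_le hy₀.le]
    have : ∀ x : ℝ, ((x - y₀) / T) ^ 2 = (x - y₀) ^ 2 / T ^ 2 := fun x => by
      rw [div_pow]
    simp_rw [this]
    rw [intervalIntegral.integral_div]
    congr 1
    have := intervalIntegral.integral_comp_sub_right (a := y₀) (b := 0)
      (fun x => x ^ 2) y₀
    rw [this]
    simp [integral_pow]
    ring
  rw [hcomp] at hbound
  have habs : |y₀| = -y₀ := abs_of_neg hy₀
  rw [habs]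
  rw [div_le_iff₀ hT2] at hbound
  nlinarith
end

section
/- Let T > 0, ξ ∈ ℝ, ᾱ ∈ ℝ, and let f be C¹ strictly convex superlinear with f' a bijection. Suppose s : [t₀, T] → ℝ is Lipschitz, satisfies (f')⁻¹((s(t) − ξ)/t) ≤ ᾱ for all t, and solves s'(t) = (f(ᾱ) − f(v(t)))/(ᾱ − v(t)) a.e., where v(t) = (f')⁻¹((s(t) − ξ)/t) (with the convention that the quotient equals f'(ᾱ) when v(t) = ᾱ). Then s is convex on [t₀, T]. -/
/-!
Write `w t = (s t - ξ) / t` and `v = (f')⁻¹ ∘ w`, so that the right-hand side of the equation is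
`G = dslope f ᾱ ∘ v`. Since `v ≤ ᾱ`, convexity of `f` gives `G ≥ f' ∘ v = w`, hence
`w' = (s' - w) / t ≥ 0` a.e. and `w` is nondecreasing. Then `v` is nondecreasing, and so is `G`
because the secant slopes of a convex function through a fixed point are monotone. An absolutely
continuous function whose a.e. derivative is nondecreasing is convex, by the fundamental theorem
of calculus for absolutely continuous functions.
-/

open Filter MeasureTheory

open Set

namespace AbsolutelyContinuousOnInterval

variable {g g' : ℝ → ℝ} {a b C : ℝ}

theorem image_sub_le_mul_sub_of_ae_hasDerivAt_le (hg : AbsolutelyContinuousOnInterval g a b)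
    (hab : a ≤ b) (hderiv : ∀ᵐ t ∂volume.restrict (Ioo a b), HasDerivAt g (g' t) t)
    (hle : ∀ t ∈ Ioo a b, g' t ≤ C) : g b - g a ≤ C * (b - a) := by
  have hderiv_le : ∀ᵐ t ∂volume.restrict (Icc a b), deriv g t ≤ C := by
    rw [← Measure.restrict_congr_set Ioo_ae_eq_Icc]
    filter_upwards [hderiv, ae_restrict_mem measurableSet_Ioo] with t ht hmem
    exact ht.deriv ▸ hle t hmem
  calc g b - g a = ∫ t in a..b, deriv g t := hg.integral_deriv_eq_sub.symm
    _ ≤ ∫ _ in a..b, C :=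
      intervalIntegral.integral_mono_ae_restrict hab hg.intervalIntegrable_deriv
        intervalIntegrable_const hderiv_le
    _ = C * (b - a) := by rw [intervalIntegral.integral_const, smul_eq_mul, mul_comm]

theorem mul_sub_le_image_sub_of_le_ae_hasDerivAt (hg : AbsolutelyContinuousOnInterval g a b)
    (hab : a ≤ b) (hderiv : ∀ᵐ t ∂volume.restrict (Ioo a b), HasDerivAt g (g' t) t)
    (hle : ∀ t ∈ Ioo a b, C ≤ g' t) : C * (b - a) ≤ g b - g a := by
  have := hg.neg.image_sub_le_mul_sub_of_ae_hasDerivAt_le hab (hderiv.mono fun _ ↦ HasDerivAt.neg)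
    (fun t ht ↦ neg_le_neg (hle t ht))
  simp only [Pi.neg_apply] at this
  linarith

end AbsolutelyContinuousOnInterval

theorem convexOn_Icc_of_ae_hasDerivAt_of_monotoneOn {s G : ℝ → ℝ} {a b : ℝ}
    (hs : AbsolutelyContinuousOnInterval s a b)
    (hderiv : ∀ᵐ t ∂volume.restrict (Ioo a b), HasDerivAt s (G t) t)
    (hG : MonotoneOn G (Ioo a b)) : ConvexOn ℝ (Icc a b) s := by
  have hsub {x y : ℝ} (hx : x ∈ Icc a b) (hy : y ∈ Icc a b) :
      AbsolutelyContinuousOnInterval s x y ∧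
        ∀ᵐ t ∂volume.restrict (Ioo x y), HasDerivAt s (G t) t :=
    ⟨hs.mono (uIcc_subset_uIcc (Icc_subset_uIcc hx) (Icc_subset_uIcc hy)),
      ae_restrict_of_ae_restrict_of_subset (Ioo_subset_Ioo hx.1 hy.2) hderiv⟩
  refine convexOn_of_slope_mono_adjacent (convex_Icc a b) fun {x y z} hx hz hxy hyz ↦ ?_
  have hy : y ∈ Ioo a b := ⟨hx.1.trans_lt hxy, hyz.trans_le hz.2⟩
  obtain ⟨hs_xy, hderiv_xy⟩ := hsub hx (Ioo_subset_Icc_self hy)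
  obtain ⟨hs_yz, hderiv_yz⟩ := hsub (Ioo_subset_Icc_self hy) hz
  have hleft : s y - s x ≤ G y * (y - x) :=
    hs_xy.image_sub_le_mul_sub_of_ae_hasDerivAt_le hxy.le hderiv_xy fun t ht ↦
      hG ⟨hx.1.trans_lt ht.1, ht.2.trans hy.2⟩ hy ht.2.le
  have hright : G y * (z - y) ≤ s z - s y :=
    hs_yz.mul_sub_le_image_sub_of_le_ae_hasDerivAt hyz.le hderiv_yz fun t ht ↦
      hG hy ⟨hy.1.trans ht.1, ht.2.trans_le hz.2⟩ ht.1.le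
  calc (s y - s x) / (y - x) ≤ G y := by rwa [div_le_iff₀ (sub_pos.2 hxy)]
    _ ≤ (s z - s y) / (z - y) := by rwa [le_div_iff₀ (sub_pos.2 hyz)]

theorem monotoneOn_sub_div_of_ae_hasDerivAt {s G : ℝ → ℝ} {a b ξ : ℝ} (ha : 0 ≤ a)
    (hs : AbsolutelyContinuousOnInterval s a b)
    (hderiv : ∀ᵐ t ∂volume.restrict (Ioo a b), HasDerivAt s (G t) t)
    (hG : ∀ t ∈ Ioo a b, (s t - ξ) / t ≤ G t) :
    MonotoneOn (fun t ↦ (s t - ξ) / t) (Ioo a b) := by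
  intro x hx y hy hxy
  have hx0 : 0 < x := ha.trans_lt hx.1
  have hpos : ∀ t ∈ uIcc x y, t ≠ 0 := fun t ht ↦
    (hx0.trans_le (uIcc_of_le hxy ▸ ht).1).ne'
  have hs_xy : AbsolutelyContinuousOnInterval s x y :=
    hs.mono (uIcc_subset_uIcc (Icc_subset_uIcc (Ioo_subset_Icc_self hx))
      (Icc_subset_uIcc (Ioo_subset_Icc_self hy)))
  have hw : AbsolutelyContinuousOnInterval (fun t ↦ (s t - ξ) / t) x y := by
    simp only [div_eq_mul_inv]
    have hconst : AbsolutelyContinuousOnInterval (fun _ ↦ ξ) x y :=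
      (LipschitzWith.const ξ).lipschitzOnWith.absolutelyContinuousOnInterval
    exact (hs_xy.fun_sub hconst).fun_mul (contDiffOn_id.inv hpos).absolutelyContinuousOnInterval
  have hderiv_w : ∀ᵐ t ∂volume.restrict (Ioo x y),
      HasDerivAt (fun t ↦ (s t - ξ) / t) ((G t - (s t - ξ) / t) / t) t := by
    filter_upwards [ae_restrict_of_ae_restrict_of_subset (Ioo_subset_Ioo hx.1.le hy.2.le) hderiv,
      ae_restrict_mem measurableSet_Ioo] with t ht hmem
    have ht0 : t ≠ 0 := (hx0.trans hmem.1).ne'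
    refine ((ht.sub_const ξ).div (hasDerivAt_id' t) ht0).congr_deriv ?_
    field_simp
  have := hw.mul_sub_le_image_sub_of_le_ae_hasDerivAt hxy hderiv_w fun t ht ↦
    div_nonneg (sub_nonneg.2 (hG t ⟨hx.1.trans ht.1, ht.2.trans hy.2⟩)) (hx0.trans ht.1).le
  linarith

theorem ConvexOn.monotone_dslope {f : ℝ → ℝ} {a : ℝ} (hf : ConvexOn ℝ univ f)
    (hfa : DifferentiableAt ℝ f a) : Monotone (dslope f a) := by
  intro u u' huu'
  rcases huu'.eq_or_lt with rfl | hlt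
  · rfl
  rcases eq_or_ne u a with rfl | hu
  · rw [dslope_same, dslope_of_ne _ hlt.ne']
    exact hf.deriv_le_slope trivial trivial hlt hfa
  rcases eq_or_ne u' a with rfl | hu'
  · rw [dslope_same, dslope_of_ne _ hu, slope_comm]
    exact hf.slope_le_deriv trivial trivial hlt hfa
  rw [dslope_of_ne _ hu, dslope_of_ne _ hu']
  exact hf.slope_mono trivial ⟨trivial, hu⟩ ⟨trivial, hu'⟩ huu'

theorem ConvexOn.deriv_le_dslope {f : ℝ → ℝ} {a u : ℝ} (hf : ConvexOn ℝ univ f)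
    (hfu : DifferentiableAt ℝ f u) (hu : u ≤ a) : deriv f u ≤ dslope f a u := by
  rcases hu.eq_or_lt with rfl | hlt
  · rw [dslope_same]
  rw [dslope_of_ne _ hlt.ne, slope_comm]
  exact hf.deriv_le_slope trivial trivial hlt hfu

theorem ite_eq_dslope (f : ℝ → ℝ) (a u : ℝ) :
    (if u = a then deriv f a else (f a - f u) / (a - u)) = dslope f a u := by
  split_ifs with h
  · rw [h, dslope_same]
  · rw [dslope_of_ne _ h, slope_def_field, ← neg_sub (f a), ← neg_sub a, neg_div_neg_eq]

theorem Monotone.strictMono_of_leftInverse {α β : Type*} [LinearOrder α] [Preorder β]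
    {g : α → β} {h : β → α} (hg : Monotone g) (hgh : Function.LeftInverse g h) :
    StrictMono h := fun p q hpq ↦
  lt_of_not_ge fun hle ↦ (hpq.trans_le (by simpa only [hgh _] using hg hle)).false

theorem stmt16_general (f : ℝ → ℝ) (hf : ContDiff ℝ 1 f)
    (hfc : StrictConvexOn ℝ Set.univ f)
    (finv : ℝ → ℝ) (hfinv : ∀ p, deriv f (finv p) = p)
    (T t₀ ξ alpha : ℝ) (ht₀ : 0 ≤ t₀) (hT : t₀ < T)
    (s : ℝ → ℝ) (K : NNReal) (hs : LipschitzOnWith K s (Set.Icc t₀ T))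
    (hv : ∀ t ∈ Set.Icc t₀ T, finv ((s t - ξ) / t) ≤ alpha)
    (hode : ∀ᵐ t ∂(volume.restrict (Set.Ioo t₀ T)),
      HasDerivAt s
        (if finv ((s t - ξ) / t) = alpha then deriv f alpha
         else (f alpha - f (finv ((s t - ξ) / t))) /
              (alpha - finv ((s t - ξ) / t))) t) :
    ConvexOn ℝ (Set.Icc t₀ T) s := by
  have hd : Differentiable ℝ f := hf.differentiable one_ne_zero
  have hconv : ConvexOn ℝ univ f := hfc.convexOn
  have hs_ac : AbsolutelyContinuousOnInterval s t₀ T :=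
    (uIcc_of_le hT.le ▸ hs).absolutelyContinuousOnInterval
  simp only [ite_eq_dslope] at hode
  have hw : MonotoneOn (fun t ↦ (s t - ξ) / t) (Ioo t₀ T) :=
    monotoneOn_sub_div_of_ae_hasDerivAt ht₀ hs_ac hode fun t ht ↦ by
      simpa only [hfinv] using hconv.deriv_le_dslope (hd _) (hv t (Ioo_subset_Icc_self ht))
  have hmono : Monotone (deriv f) := by
    simpa only [monotoneOn_univ] using hconv.monotoneOn_deriv fun x _ ↦ hd x
  exact convexOn_Icc_of_ae_hasDerivAt_of_monotoneOn hs_ac hode <|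
    (hconv.monotone_dslope (hd alpha)).comp_monotoneOn
      ((hmono.strictMono_of_leftInverse hfinv).monotone.comp_monotoneOn hw)

/-- a Lipschitz solution of
`s'(t) = (f(ᾱ) − f(v(t)))/(ᾱ − v(t))` with `v(t) = (f')⁻¹((s(t) − ξ)/t) ≤ ᾱ`
is convex. -/
theorem stmt16 (f : ℝ → ℝ) (hf : ContDiff ℝ 1 f)
    (hfc : StrictConvexOn ℝ Set.univ f)
    (hsuper : Tendsto (fun p => f p / |p|) (cocompact ℝ) atTop)
    (finv : ℝ → ℝ) (hfinv : ∀ p, deriv f (finv p) = p)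
    (hfinv2 : ∀ x, finv (deriv f x) = x)
    (T t₀ ξ alpha : ℝ) (ht₀ : 0 ≤ t₀) (hT : t₀ < T)
    (s : ℝ → ℝ) (K : NNReal) (hs : LipschitzOnWith K s (Set.Icc t₀ T))
    (hv : ∀ t ∈ Set.Icc t₀ T, finv ((s t - ξ) / t) ≤ alpha)
    (hode : ∀ᵐ t ∂(volume.restrict (Set.Ioo t₀ T)),
      HasDerivAt s
        (if finv ((s t - ξ) / t) = alpha then deriv f alpha
         else (f alpha - f (finv ((s t - ξ) / t))) /
              (alpha - finv ((s t - ξ) / t))) t) :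
    ConvexOn ℝ (Set.Icc t₀ T) s :=
  stmt16_general f hf hfc finv hfinv T t₀ ξ alpha ht₀ hT s K hs hv hode
end
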